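/- arXiv:1003.4127 — 3 statements merged into one kernel-verified Lean document; each statement's English description precedes it below -/
import Mathlib

section
/- Let d ≥ 1, let ε, τ, Δt > 0, ν < 1, ρ > 0, T ∈ ℝ, u ∈ ℝ^d, and let V, Σ be d×d real matrices. Define Θ by ρ·Θ = Σ − ρ·(u ⊗ u) and 𝒯 = (1−ν)·T·I + ν·Θ, where I is the d×d identity matrix and u ⊗ u is the matrix with entries u_i u_j. If Σ = (ε/(ε+τΔt))·V + (τΔt/(ε+τΔt))·ρ·(𝒯 + u ⊗ u), then Σ = (ε/(ε+(1−ν)τΔt))·V + ((1−ν)τΔt/(ε+(1−ν)τΔt))·ρ·(T·I + u ⊗ u). (This resolves the implicit second-moment equation of the IMEX scheme for the ES-BGK model explicitly, equation (AP-111) of the paper.) -/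
open Matrix

/-! Substituting `ρ • Θ = S - ρ • u ⊗ u` shows `ρ • (𝒯 + u ⊗ u) = (1 - ν) • ρ • (T • 1 + u ⊗ u) + ν • S`,
so the implicit relation is affine in `S` with coefficient `ν τ Δt / (ε + τ Δt)` on the right. Multiplying
out by `ε + τ Δt` and moving the `S`-term to the left leaves `(ε + (1 - ν) τ Δt) • S` on the left,
and `ε + (1 - ν) τ Δt > 0` because `ν < 1`. -/

section Relaxation

variable {𝕜 E : Type*} [Field 𝕜] [AddCommGroup E] [Module 𝕜 E]

theorem eq_div_smul_add_div_smul_iff {a : 𝕜} (ha : a ≠ 0) (p q : 𝕜) (x y z : E) :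
    x = (p / a) • y + (q / a) • z ↔ a • x = p • y + q • z := by
  rw [div_eq_inv_mul, div_eq_inv_mul, mul_smul, mul_smul, ← smul_add, eq_inv_smul_iff₀ ha]

theorem eq_explicit_of_eq_implicit_relaxation {ε k ν : 𝕜} {x v m : E}
    (hεk : ε + k ≠ 0) (hενk : ε + (1 - ν) * k ≠ 0)
    (hx : x = (ε / (ε + k)) • v + (k / (ε + k)) • ((1 - ν) • m + ν • x)) :
    x = (ε / (ε + (1 - ν) * k)) • v + ((1 - ν) * k / (ε + (1 - ν) * k)) • m := by
  rw [eq_div_smul_add_div_smul_iff hεk] at hx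
  rw [eq_div_smul_add_div_smul_iff hενk]
  linear_combination (norm := module) hx

end Relaxation

theorem stmt_2_general {d : ℕ} (ε τ Δt ν ρ T : ℝ)
    (hε : 0 < ε) (hτ : 0 < τ) (hΔt : 0 < Δt) (hν : ν < 1)
    (u : Fin d → ℝ) (V S Θ 𝒯 : Matrix (Fin d) (Fin d) ℝ)
    (hΘ : ρ • Θ = S - ρ • vecMulVec u u)
    (h𝒯 : 𝒯 = ((1 - ν) * T) • (1 : Matrix (Fin d) (Fin d) ℝ) + ν • Θ)
    (hS : S = (ε / (ε + τ * Δt)) • V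
        + (τ * Δt / (ε + τ * Δt)) • (ρ • (𝒯 + vecMulVec u u))) :
    S = (ε / (ε + (1 - ν) * τ * Δt)) • V
        + ((1 - ν) * τ * Δt / (ε + (1 - ν) * τ * Δt)) •
          (ρ • (T • (1 : Matrix (Fin d) (Fin d) ℝ) + vecMulVec u u)) := by
  have hk : 0 < τ * Δt := mul_pos hτ hΔt
  have hνk : 0 < (1 - ν) * (τ * Δt) := mul_pos (sub_pos.2 hν) hk
  have h_target : ρ • (𝒯 + vecMulVec u u) =
      (1 - ν) • (ρ • (T • (1 : Matrix (Fin d) (Fin d) ℝ) + vecMulVec u u)) + ν • S := by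
    rw [h𝒯]
    linear_combination (norm := module) ν • hΘ
  rw [h_target] at hS
  simpa only [mul_assoc] using
    eq_explicit_of_eq_implicit_relaxation (by positivity) (by positivity) hS

/-- Explicit resolution of the implicit second-moment equation (AP-111) of the
IMEX scheme for the ES-BGK model. -/
theorem stmt_2 {d : ℕ} (hd : 1 ≤ d) (ε τ Δt ν ρ T : ℝ)
    (hε : 0 < ε) (hτ : 0 < τ) (hΔt : 0 < Δt) (hν : ν < 1) (hρ : 0 < ρ)
    (u : Fin d → ℝ) (V S Θ 𝒯 : Matrix (Fin d) (Fin d) ℝ)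
    (hΘ : ρ • Θ = S - ρ • vecMulVec u u)
    (h𝒯 : 𝒯 = ((1 - ν) * T) • (1 : Matrix (Fin d) (Fin d) ℝ) + ν • Θ)
    (hS : S = (ε / (ε + τ * Δt)) • V
        + (τ * Δt / (ε + τ * Δt)) • (ρ • (𝒯 + vecMulVec u u))) :
    S = (ε / (ε + (1 - ν) * τ * Δt)) • V
        + ((1 - ν) * τ * Δt / (ε + (1 - ν) * τ * Δt)) •
          (ρ • (T • (1 : Matrix (Fin d) (Fin d) ℝ) + vecMulVec u u)) :=
  stmt_2_general ε τ Δt ν ρ T hε hτ hΔt hν u V S Θ 𝒯 hΘ h𝒯 hS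
end

section
/- Let Θ be a real symmetric positive definite 3×3 matrix, let T = trace(Θ)/3, and let ν ∈ [−1/2, 1). Then the matrix 𝒯 = (1−ν)·T·I + ν·Θ is symmetric positive definite. (This guarantees that the corrected tensor of the ES-BGK model defines a genuine Gaussian distribution for all admissible Prandtl parameters ν ∈ [−1/2, 1).) -/
/-!
The eigenvalues of `Θ.trace • 1 - Θ` are the sums `∑_{j ≠ i} λ_j` of the other eigenvalues of `Θ`,
so this matrix is positive definite as soon as the dimension `d` is at least two. For `ν ≥ 0` the
corrected tensor is a positive multiple of `1` plus a positive semidefinite matrix; for `ν < 0`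
it splits as `(1 + (d - 1) ν) T • 1 + (-ν) (Θ.trace • 1 - Θ)`, and `ν ≥ -1 / (d - 1)` is exactly
what keeps the first coefficient nonnegative.
-/

open Matrix

open scoped ComplexOrder in
lemma Matrix.PosDef.trace_smul_one_sub {𝕜 n : Type*} [RCLike 𝕜] [Fintype n] [DecidableEq n]
    [Nontrivial n] {A : Matrix n n 𝕜} (hA : A.PosDef) :
    (A.trace • 1 - A).PosDef := by
  set e := hA.1.eigenvalues
  set U := hA.1.eigenvectorUnitary
  have hdiag : diagonal (fun i ↦ ((∑ j, e j - e i : ℝ) : 𝕜)) =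
      (∑ j, (e j : 𝕜)) • 1 - diagonal (RCLike.ofReal ∘ e) := by
    ext i j
    rcases eq_or_ne i j with rfl | h <;> simp [*]
  have hconj : A.trace • 1 - A =
      U * diagonal (fun i ↦ ((∑ j, e j - e i : ℝ) : 𝕜)) * (star U : Matrix n n 𝕜) := by
    conv_lhs => rw [hA.1.trace_eq_sum_eigenvalues]; arg 2; rw [hA.1.spectral_theorem]
    rw [Unitary.conjStarAlgAut_apply, hdiag, mul_sub, sub_mul, mul_smul_comm, mul_one,
      smul_mul_assoc, Unitary.mul_star_self_of_mem U.2]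
  rw [hconj, Unitary.isUnit_coe.posDef_star_right_conjugate_iff, posDef_diagonal_iff]
  intro i
  obtain ⟨j, hji⟩ := exists_ne i
  have hlt : e i < ∑ k, e k := Finset.single_lt_sum hji (Finset.mem_univ i) (Finset.mem_univ j)
    (hA.eigenvalues_pos j) fun k _ _ ↦ (hA.eigenvalues_pos k).le
  exact_mod_cast sub_pos.2 hlt

namespace Matrix

variable {n : Type*} [Fintype n] [DecidableEq n]

/-- The ES-BGK corrected tensor `𝒯`; the temperature `T` is `Θ.trace / card n`. -/
noncomputable def correctedTensor (ν : ℝ) (Θ : Matrix n n ℝ) : Matrix n n ℝ :=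
  ((1 - ν) * (Θ.trace / Fintype.card n)) • 1 + ν • Θ

lemma PosDef.correctedTensor [Nontrivial n] {Θ : Matrix n n ℝ} (hΘ : Θ.PosDef) {ν : ℝ}
    (hν₁ : -1 / ((Fintype.card n : ℝ) - 1) ≤ ν) (hν₂ : ν < 1) :
    (correctedTensor ν Θ).PosDef := by
  have hd : (1 : ℝ) < Fintype.card n := by exact_mod_cast Fintype.one_lt_card
  rw [Matrix.correctedTensor]
  set d : ℝ := ↑(Fintype.card n)
  set T := Θ.trace / d
  have hT : 0 < T := div_pos hΘ.trace_pos (by linarith)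
  rcases le_or_gt 0 ν with hν | hν
  · exact (PosDef.one.smul (mul_pos (sub_pos.2 hν₂) hT)).add_posSemidef (hΘ.posSemidef.smul hν)
  · have hsplit : ((1 - ν) * T) • (1 : Matrix n n ℝ) + ν • Θ =
        ((1 + (d - 1) * ν) * T) • 1 + (-ν) • (Θ.trace • 1 - Θ) := by
      have htrace : Θ.trace = d * T := by simp only [T]; field_simp
      rw [htrace, smul_sub, smul_smul, ← add_sub_assoc, ← add_smul, neg_smul, sub_neg_eq_add]
      congr 2
      ring
    have hcoeff : 0 ≤ 1 + (d - 1) * ν := by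
      rw [div_le_iff₀ (by linarith)] at hν₁
      linarith
    rw [hsplit]
    exact PosDef.posSemidef_add (PosSemidef.one.smul (mul_nonneg hcoeff hT.le))
      (hΘ.trace_smul_one_sub.smul (neg_pos.2 hν))

end Matrix

/-- For every admissible Prandtl parameter `ν ∈ [−1/2, 1)`, the corrected
tensor `𝒯 = (1−ν)T·I + νΘ` of the ES-BGK model (with `T = trace(Θ)/3`) is
symmetric positive definite. -/
theorem stmt_8 (Θ : Matrix (Fin 3) (Fin 3) ℝ) (hΘ : Θ.PosDef)
    (T ν : ℝ) (hT : T = Θ.trace / 3) (hν₁ : -(1/2 : ℝ) ≤ ν) (hν₂ : ν < 1) :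
    (((1 - ν) * T) • (1 : Matrix (Fin 3) (Fin 3) ℝ) + ν • Θ).PosDef := by
  have h := hΘ.correctedTensor (ν := ν) (by norm_num; linarith) hν₂
  simpa [correctedTensor, hT] using h
end

section
/- Let d ≥ 1, T > 0, ν ∈ ℝ, ρ > 0, u ∈ ℝ^d, v ∈ ℝ^d, and let Θ₁ be a real symmetric d×d matrix with trace(Θ₁) = 0. Consider the function ε ↦ ρ/√((2π)^d det(T·I + νεΘ₁)) · exp(−½⟨v−u, (T·I + νεΘ₁)⁻¹(v−u)⟩), which is defined for all ε in a neighborhood of 0. Its derivative at ε = 0 equals ν · (M[ρ,u,T](v) / (2T²)) · ⟨v−u, Θ₁(v−u)⟩, where M[ρ,u,T](v) = ρ/(2πT)^{d/2} · exp(−|v−u|²/(2T)) is the Maxwellian. (This identifies the first-order Chapman–Enskog correction g₁ = (𝒢[f] − ℳ[f])/ε of the anisotropic Gaussian.) -/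
open Matrix Real

/-- The Maxwellian distribution
`M[ρ,u,T](v) = ρ/(2πT)^(d/2) · exp(−|v−u|²/(2T))`. -/
noncomputable def maxwellian (d : ℕ) (ρ : ℝ) (u : Fin d → ℝ) (T : ℝ)
    (v : Fin d → ℝ) : ℝ :=
  ρ / (2 * π * T) ^ ((d : ℝ) / 2) * Real.exp (-((v - u) ⬝ᵥ (v - u)) / (2 * T))

/-!
Along a line `s ↦ A + s • B` of covariance matrices, the logarithmic derivative of the Gaussian
at `s = 0` is `(⟨w, A⁻¹ B A⁻¹ w⟩ - tr (A⁻¹ B)) / 2` with `w = v - u`: Jacobi's formula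
differentiates the normalising determinant and `d(A⁻¹) = -A⁻¹ (dA) A⁻¹` the exponent. At
`A = T • 1` the Gaussian is the Maxwellian, the trace term is `tr Θ₁ / T = 0`, and the
substitution `s = ν ε` contributes the factor `ν`.
-/

-- Matrices carry no global norm; any choice yields the same derivatives.
attribute [local instance] Matrix.linftyOpNormedAddCommGroup Matrix.linftyOpNormedRing
  Matrix.linftyOpNormedAlgebra

namespace Matrix

variable {n : Type*} [Fintype n] [DecidableEq n]

theorem inv_smul_one {K : Type*} [Field K] {c : K} (hc : c ≠ 0) :
    (c • (1 : Matrix n n K))⁻¹ = c⁻¹ • 1 :=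
  inv_eq_left_inv (by simp [smul_smul, hc])

section NontriviallyNormedField

variable {𝕜 : Type*} [NontriviallyNormedField 𝕜]

theorem hasDerivAt_det_one_add_smul (M : Matrix n n 𝕜) :
    HasDerivAt (fun s : 𝕜 => (1 + s • M).det) M.trace 0 := by
  have h := (det (1 + (Polynomial.X : Polynomial 𝕜) • M.map Polynomial.C)).hasDerivAt 0
  rw [derivative_det_one_add_X_smul] at h
  convert h using 1
  funext s
  simp [_root_.eval_det, ← smul_eq_mul_diagonal]

theorem hasDerivAt_det_add_smul {A : Matrix n n 𝕜} (hA : IsUnit A.det) (B : Matrix n n 𝕜) :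
    HasDerivAt (fun s : 𝕜 => (A + s • B).det) (A.det * (A⁻¹ * B).trace) 0 := by
  have hfactor (s : 𝕜) : A + s • B = A * (1 + s • (A⁻¹ * B)) := by
    rw [Matrix.mul_add, Matrix.mul_one, mul_smul_comm, ← Matrix.mul_assoc, mul_nonsing_inv A hA,
      Matrix.one_mul]
  simp only [hfactor, det_mul]
  exact (hasDerivAt_det_one_add_smul _).const_mul _

end NontriviallyNormedField

theorem _root_.HasDerivAt.dotProduct_mulVec {𝕜 : Type*} [NontriviallyNormedField 𝕜]
    [CompleteSpace 𝕜] {F : 𝕜 → Matrix n n 𝕜} {F' : Matrix n n 𝕜} {x : 𝕜}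
    (hF : HasDerivAt F F' x) (w v : n → 𝕜) :
    HasDerivAt (fun s => w ⬝ᵥ F s *ᵥ v) (w ⬝ᵥ F' *ᵥ v) x := by
  let L : Matrix n n 𝕜 →ₗ[𝕜] 𝕜 :=
    { toFun := fun M => w ⬝ᵥ M *ᵥ v
      map_add' := fun M N => by simp [add_mulVec, dotProduct_add]
      map_smul' := fun c M => by simp [smul_mulVec, dotProduct_smul] }
  exact L.toContinuousLinearMap.hasFDerivAt.comp_hasDerivAt x hF

theorem hasDerivAt_inv_add_smul {𝕜 : Type*} [RCLike 𝕜] {A : Matrix n n 𝕜} (hA : IsUnit A.det)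
    (B : Matrix n n 𝕜) :
    HasDerivAt (fun s : 𝕜 => (A + s • B)⁻¹) (-(A⁻¹ * B * A⁻¹)) 0 := by
  obtain ⟨u, rfl⟩ := (isUnit_iff_isUnit_det A).mpr hA
  have hline : HasDerivAt (fun s : 𝕜 => (u : Matrix n n 𝕜) + s • B) B 0 :=
    (((hasDerivAt_id (0 : 𝕜)).smul_const B).const_add _).congr_deriv (one_smul _ _)
  have h := (hasFDerivAt_ringInverse (𝕜 := 𝕜) u).comp_hasDerivAt_of_eq 0 hline (by simp)
  simp only [Function.comp_def, ← nonsing_inv_eq_ringInverse] at h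
  rw [coe_units_inv] at h
  exact h

end Matrix

/-- `𝒢[ρ,u,𝒯]`, the Gaussian with covariance tensor `𝒯`. -/
noncomputable def gaussian (d : ℕ) (ρ : ℝ) (u : Fin d → ℝ) (𝒯 : Matrix (Fin d) (Fin d) ℝ)
    (v : Fin d → ℝ) : ℝ :=
  ρ / Real.sqrt ((2 * π) ^ d * 𝒯.det) * Real.exp (-(1 / 2) * ((v - u) ⬝ᵥ 𝒯⁻¹ *ᵥ (v - u)))

theorem hasDerivAt_gaussian_add_smul {d : ℕ} (ρ : ℝ) (u v : Fin d → ℝ)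
    {A : Matrix (Fin d) (Fin d) ℝ} (hA : 0 < A.det) (B : Matrix (Fin d) (Fin d) ℝ) :
    HasDerivAt (fun s : ℝ => gaussian d ρ u (A + s • B) v)
      (gaussian d ρ u A v * (((v - u) ⬝ᵥ (A⁻¹ * B * A⁻¹) *ᵥ (v - u) - (A⁻¹ * B).trace) / 2))
      0 := by
  have hunit : IsUnit A.det := hA.ne'.isUnit
  have hnorm : 0 < (2 * π) ^ d * (A + (0 : ℝ) • B).det := by
    rw [zero_smul, add_zero]; positivity
  have hsqrt := ((hasDerivAt_det_add_smul hunit B).const_mul ((2 * π) ^ d)).sqrt hnorm.ne'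
  have hprefactor := (hasDerivAt_const (0 : ℝ) ρ).div hsqrt (Real.sqrt_pos.mpr hnorm).ne'
  have hexp := (((hasDerivAt_inv_add_smul hunit B).dotProduct_mulVec (v - u) (v - u)).const_mul
    (-(1 / 2) : ℝ)).exp
  refine (hprefactor.mul hexp).congr_deriv ?_
  have hsq : Real.sqrt ((2 * π) ^ d * A.det) ^ 2 = (2 * π) ^ d * A.det :=
    Real.sq_sqrt (by simpa using hnorm.le)
  simp only [zero_smul, add_zero, gaussian, Pi.div_apply, neg_mulVec, dotProduct_neg]
  field_simp
  rw [hsq]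
  ring

theorem gaussian_smul_one {d : ℕ} (ρ : ℝ) (u : Fin d → ℝ) {T : ℝ} (hT : 0 < T) (v : Fin d → ℝ) :
    gaussian d ρ u (T • 1) v = maxwellian d ρ u T v := by
  have hsqrt : Real.sqrt ((2 * π) ^ d * (T • (1 : Matrix (Fin d) (Fin d) ℝ)).det)
      = (2 * π * T) ^ ((d : ℝ) / 2) := by
    rw [det_smul, det_one, Fintype.card_fin, mul_one, ← mul_pow, Real.sqrt_eq_rpow,
      ← Real.rpow_natCast, ← Real.rpow_mul (by positivity)]
    ring_nf
  rw [gaussian, maxwellian, hsqrt, inv_smul_one hT.ne', smul_mulVec, one_mulVec, dotProduct_smul,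
    smul_eq_mul]
  congr 2
  field_simp

theorem stmt_10_general (d : ℕ) (ρ T ν : ℝ) (hT : 0 < T)
    (u v : Fin d → ℝ) (Θ₁ : Matrix (Fin d) (Fin d) ℝ)
    (htr : Θ₁.trace = 0) :
    HasDerivAt
      (fun ε : ℝ =>
        ρ / Real.sqrt ((2 * π) ^ d *
            (T • (1 : Matrix (Fin d) (Fin d) ℝ) + (ν * ε) • Θ₁).det) *
          Real.exp (-(1/2) * ((v - u) ⬝ᵥ
            (T • (1 : Matrix (Fin d) (Fin d) ℝ) + (ν * ε) • Θ₁)⁻¹ *ᵥ (v - u))))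
      (ν * (maxwellian d ρ u T v / (2 * T ^ 2)) * ((v - u) ⬝ᵥ Θ₁ *ᵥ (v - u)))
      0 := by
  have hdet : 0 < (T • (1 : Matrix (Fin d) (Fin d) ℝ)).det := by
    rw [det_smul, det_one, mul_one]; positivity
  have hscaled := (hasDerivAt_gaussian_add_smul ρ u v hdet Θ₁).comp_of_eq (0 : ℝ)
    ((hasDerivAt_id' (0 : ℝ)).const_mul ν) (mul_zero ν).symm
  refine hscaled.congr_deriv ?_
  rw [gaussian_smul_one ρ u hT v, inv_smul_one hT.ne']
  simp only [smul_mul_assoc, Matrix.mul_smul, Matrix.one_mul, Matrix.mul_one, trace_smul, htr,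
    smul_mulVec, dotProduct_smul, smul_eq_mul]
  field_simp
  ring

/-- First-order Chapman–Enskog correction of the anisotropic Gaussian: the
derivative in `ε` at `ε = 0` of `v ↦ 𝒢[ρ,u,T·I+νεΘ₁](v)` equals
`ν · (M/(2T²)) · ⟨v−u, Θ₁(v−u)⟩`. -/
theorem stmt_10 (d : ℕ) (hd : 1 ≤ d) (ρ T ν : ℝ) (hρ : 0 < ρ) (hT : 0 < T)
    (u v : Fin d → ℝ) (Θ₁ : Matrix (Fin d) (Fin d) ℝ) (hΘ₁ : Θ₁.IsSymm)
    (htr : Θ₁.trace = 0) :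
    HasDerivAt
      (fun ε : ℝ =>
        ρ / Real.sqrt ((2 * π) ^ d *
            (T • (1 : Matrix (Fin d) (Fin d) ℝ) + (ν * ε) • Θ₁).det) *
          Real.exp (-(1/2) * ((v - u) ⬝ᵥ
            (T • (1 : Matrix (Fin d) (Fin d) ℝ) + (ν * ε) • Θ₁)⁻¹ *ᵥ (v - u))))
      (ν * (maxwellian d ρ u T v / (2 * T ^ 2)) * ((v - u) ⬝ᵥ Θ₁ *ᵥ (v - u)))
      0 :=
  stmt_10_general d ρ T ν hT u v Θ₁ htr
end
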